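/- arXiv:1802.02200 — 2 statements merged into one kernel-verified Lean document; each statement's English description precedes it below -/
import Mathlib

section
/- Let 𝔽_q be a finite field and let f_1, …, f_m : 𝔽_q × 𝔽_q → ℂ be 1-bounded. Set F(x) := 𝔼_{y∈𝔽_q} ∏_{i=1}^m f_i(x, y), and for h_1, …, h_t ∈ 𝔽_q set F_{h_1,…,h_t}(x) := 𝔼_{y∈𝔽_q} ∏_{i=1}^m Δ^{(1)}_{h_1,…,h_t} f_i(x, y). Then for every integer s ≥ 2, ‖F‖_{U^s}^{2^{2s−2}} ≤ 𝔼_{h_1,…,h_{s−2}∈𝔽_q} ‖F_{h_1,…,h_{s−2}}‖_{U^2}^4. -/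
/-!
Write `F = 𝔼_y g_y` with `g_y(x) = ∏ᵢ fᵢ(x, y)`, so that `F_{h₁,…,h_t} = 𝔼_y Δ_{h₁,…,h_t} g_y`.
Since `‖u‖_{U^{r+2}}^{2^{r+2}} = 𝔼_h ‖Δ_h u‖_{U^{r+1}}^{2^{r+1}}` and
`Δ_h (𝔼_z q_z) = 𝔼_{z,z'} q_z(· + h) conj q_{z'}` is again an average over a family,
induction over families of functions reduces the claim to the `U²` inequality
`‖𝔼_z q_z‖_{U²}⁴ ≤ 𝔼_h |𝔼_{x,z} Δ_h q_z(x)|²`. Writing `c_{a,b}(h) = 𝔼_x a(x + h) conj b(x)`,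
that one is Cauchy–Schwarz over the pairs `(z, z')` followed by the change of variables
`𝔼_h |c_{a,b}(h)|² = 𝔼_h c_{a,a}(h) conj c_{b,b}(h)`.
This bounds even `‖F‖_{U^s}^{2^s}`, which dominates `‖F‖_{U^s}^{2^{2s-2}}` as `‖F‖_{U^s} ≤ 1`.
-/

/-- The multiplicative difference `Δ_h f(x) = f(x+h)·conj(f(x))`. -/
noncomputable def mDiff {F : Type*} [Add F] (h : F) (f : F → ℂ) : F → ℂ :=
  fun x => f (x + h) * (starRingEnd ℂ) (f x)

/-- Iterated multiplicative difference `Δ_{h₁,…,h_s} f`. -/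
noncomputable def mDiffIter {F : Type*} [Add F] : (s : ℕ) → (Fin s → F) → (F → ℂ) → (F → ℂ)
  | 0, _, f => f
  | s + 1, h, f => mDiffIter s (fun i => h i.succ) (mDiff (h 0) f)

/-- The Gowers `U^s`-norm: `‖f‖_{U^s}^{2^s} = 𝔼_{x,h₁,…,h_s} Δ_{h₁,…,h_s} f(x)`. -/
noncomputable def gowersNorm {F : Type*} [AddCommGroup F] [Fintype F] (s : ℕ) (f : F → ℂ) : ℝ :=
  (‖(∑ h : Fin s → F, ∑ x : F, mDiffIter s h f x)
      / (Fintype.card F : ℂ) ^ (s + 1)‖) ^ (((2 : ℝ) ^ s)⁻¹)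

/-- The multiplicative difference in the first variable,
`Δ⁽¹⁾_h f(x,y) = f(x+h,y)·conj(f(x,y))`. -/
noncomputable def mDiff1 {F : Type*} [Add F] (h : F) (f : F → F → ℂ) : F → F → ℂ :=
  fun x y => f (x + h) y * (starRingEnd ℂ) (f x y)

/-- Iterated multiplicative difference in the first variable `Δ⁽¹⁾_{h₁,…,h_t} f`. -/
noncomputable def mDiff1Iter {F : Type*} [Add F] :
    (t : ℕ) → (Fin t → F) → (F → F → ℂ) → (F → F → ℂ)
  | 0, _, f => f
  | t + 1, h, f => mDiff1Iter t (fun i => h i.succ) (mDiff1 (h 0) f)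

open Finset
open scoped BigOperators ComplexConjugate

lemma Complex.conj_expect {ι : Type*} (s : Finset ι) (f : ι → ℂ) :
    conj (𝔼 i ∈ s, f i) = 𝔼 i ∈ s, conj (f i) := by
  simp only [expect_eq_sum_div_card, map_div₀, map_sum, map_natCast]

lemma mDiff_comm {X : Type*} [AddCommSemigroup X] (h h' : X) (u : X → ℂ) :
    mDiff h (mDiff h' u) = mDiff h' (mDiff h u) := by
  funext x
  simp only [mDiff, map_mul, Complex.conj_conj, add_right_comm x h h']
  ring

lemma mDiffIter_succ {X : Type*} [Add X] (r : ℕ) (h : X) (k : Fin r → X) (u : X → ℂ) :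
    mDiffIter (r + 1) (Fin.cons h k) u = mDiffIter r k (mDiff h u) := by
  simp only [mDiffIter, Fin.cons_succ, Fin.cons_zero]

lemma mDiffIter_mDiff {X : Type*} [AddCommSemigroup X] (r : ℕ) (k : Fin r → X) (h : X)
    (u : X → ℂ) : mDiffIter r k (mDiff h u) = mDiff h (mDiffIter r k u) := by
  induction r generalizing u with
  | zero => rfl
  | succ r ih => exact (congrArg _ (mDiff_comm _ _ u)).trans (ih _ _)

lemma mDiffIter_prod {X ι : Type*} [Add X] (s : Finset ι) (r : ℕ) (k : Fin r → X)
    (u : ι → X → ℂ) (x : X) :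
    mDiffIter r k (fun x => ∏ i ∈ s, u i x) x = ∏ i ∈ s, mDiffIter r k (u i) x := by
  induction r generalizing u with
  | zero => rfl
  | succ r ih =>
    have : mDiff (k 0) (fun x => ∏ i ∈ s, u i x)
        = fun x => ∏ i ∈ s, mDiff (k 0) (u i) x := by
      funext x
      simp only [mDiff, map_prod, prod_mul_distrib]
    exact (congrArg (mDiffIter r _ · x) this).trans (ih _ _)

lemma mDiff1Iter_apply {X : Type*} [Add X] (t : ℕ) (k : Fin t → X) (f : X → X → ℂ)
    (x y : X) :
    mDiff1Iter t k f x y = mDiffIter t k (fun x => f x y) x := by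
  induction t generalizing f with
  | zero => rfl
  | succ t ih => exact ih _ _

lemma norm_mDiffIter_le_one {X : Type*} [Add X] (r : ℕ) (k : Fin r → X) {u : X → ℂ}
    (hu : ∀ x, ‖u x‖ ≤ 1) (x : X) : ‖mDiffIter r k u x‖ ≤ 1 := by
  induction r generalizing u with
  | zero => exact hu x
  | succ r ih =>
    refine ih _ fun x => ?_
    rw [mDiff, norm_mul, Complex.norm_conj]
    exact mul_le_one₀ (hu _) (norm_nonneg _) (hu x)

lemma mDiff_expect {X Z : Type*} [Add X] [Fintype Z] (h : X) (q : Z → X → ℂ) :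
    mDiff h (fun x => 𝔼 z, q z x)
      = fun x => 𝔼 p : Z × Z, q p.1 (x + h) * conj (q p.2 x) := by
  funext x
  rw [mDiff, Complex.conj_expect, Fintype.expect_mul_expect, ← univ_product_univ, expect_product]

lemma Fin.expect_pi_eq_expect_cons {X M : Type*} [Fintype X] [AddCommMonoid M] [Module ℚ≥0 M]
    (r : ℕ) (φ : (Fin (r + 1) → X) → M) :
    𝔼 k, φ k = 𝔼 h, 𝔼 k, φ (Fin.cons h k) := by
  rw [← Fintype.expect_equiv (Fin.consEquiv fun _ => X) (fun p => φ (Fin.cons p.1 p.2)) φ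
    (fun _ => rfl), ← univ_product_univ, expect_product]

section Gowers

variable {X : Type*} [AddCommGroup X] [Fintype X]

lemma expect_mDiff_eq_norm_sq (u : X → ℂ) :
    𝔼 h, 𝔼 x, mDiff h u x = ((‖𝔼 x, u x‖ ^ 2 : ℝ) : ℂ) := by
  have shift : ∀ x, 𝔼 h, u (x + h) = 𝔼 y, u y :=
    fun x => Fintype.expect_equiv (Equiv.addLeft x) _ _ fun _ => rfl
  simp only [mDiff]
  rw [expect_comm]
  simp only [← expect_mul, shift, ← mul_expect, ← Complex.conj_expect, Complex.mul_conj']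
  push_cast
  rfl

/-- `gowersSq r u = ‖u‖_{U^{r+1}}^{2^{r+1}}`, see `gowersNorm_pow_eq_gowersSq`. -/
noncomputable def gowersSq (r : ℕ) (u : X → ℂ) : ℝ :=
  𝔼 k : Fin r → X, ‖𝔼 x, mDiffIter r k u x‖ ^ 2

lemma gowersSq_nonneg (r : ℕ) (u : X → ℂ) : 0 ≤ gowersSq r u :=
  expect_nonneg fun _ _ => sq_nonneg _

lemma gowersSq_succ (r : ℕ) (u : X → ℂ) :
    gowersSq (r + 1) u = 𝔼 h, gowersSq r (mDiff h u) := by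
  simp only [gowersSq, Fin.expect_pi_eq_expect_cons, mDiffIter_succ]

lemma gowersSq_zero (u : X → ℂ) : gowersSq 0 u = ‖𝔼 x, u x‖ ^ 2 :=
  Fintype.expect_const _

lemma gowersSq_le_one (r : ℕ) {u : X → ℂ} (hu : ∀ x, ‖u x‖ ≤ 1) :
    gowersSq r u ≤ 1 := by
  refine expect_le univ_nonempty fun k _ => pow_le_one₀ (norm_nonneg _) ?_
  exact (RCLike.norm_expect_le (K := ℝ)).trans
    (expect_le univ_nonempty fun x _ => norm_mDiffIter_le_one r k hu x)

lemma gowersNorm_pow_eq_gowersSq (r : ℕ) (u : X → ℂ) :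
    gowersNorm (r + 1) u ^ 2 ^ (r + 1) = gowersSq r u := by
  have hsum : (∑ k : Fin (r + 1) → X, ∑ x, mDiffIter (r + 1) k u x)
      / (Fintype.card X : ℂ) ^ (r + 1 + 1) = gowersSq r u := by
    calc _ = 𝔼 k : Fin (r + 1) → X, 𝔼 x, mDiffIter (r + 1) k u x := by
          simp only [Fintype.expect_eq_sum_div_card, ← sum_div, Fintype.card_fun,
            Fintype.card_fin, div_div]
          push_cast
          ring
      _ = 𝔼 k, 𝔼 h, 𝔼 x, mDiff h (mDiffIter r k u) x := by
          rw [Fin.expect_pi_eq_expect_cons, expect_comm]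
          simp only [mDiffIter_succ, mDiffIter_mDiff]
      _ = gowersSq r u := by
          simp only [expect_mDiff_eq_norm_sq, gowersSq, Complex.ofReal_expect]
  rw [gowersNorm, hsum, Complex.norm_real, Real.norm_of_nonneg (gowersSq_nonneg r u),
    ← Real.rpow_natCast, ← Real.rpow_mul (gowersSq_nonneg r u)]
  norm_num

lemma norm_expect_sq_le {ι : Type*} [Fintype ι] (c : ι → ℂ) :
    ‖𝔼 i, c i‖ ^ 2 ≤ 𝔼 i, ‖c i‖ ^ 2 := by
  calc ‖𝔼 i, c i‖ ^ 2 ≤ (𝔼 i, ‖c i‖ * 1) ^ 2 := by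
        simp only [mul_one]
        exact pow_le_pow_left₀ (norm_nonneg _) (RCLike.norm_expect_le (K := ℝ)) 2
    _ ≤ (𝔼 i, ‖c i‖ ^ 2) * 𝔼 i : ι, (1 : ℝ) ^ 2 := expect_mul_sq_le_sq_mul_sq _ _ _
    _ ≤ 𝔼 i, ‖c i‖ ^ 2 := by
        rcases isEmpty_or_nonempty ι with hι | hι <;> simp

lemma Complex.ofReal_norm_expect_sq {ι : Type*} [Fintype ι] (c : ι → ℂ) :
    ((‖𝔼 i, c i‖ ^ 2 : ℝ) : ℂ) = 𝔼 p : ι × ι, c p.1 * conj (c p.2) := by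
  push_cast
  rw [← Complex.mul_conj', Complex.conj_expect, Fintype.expect_mul_expect, ← univ_product_univ,
    expect_product]

lemma expect_norm_sq_correlation (a b : X → ℂ) :
    ((𝔼 h, ‖𝔼 x, a (x + h) * conj (b x)‖ ^ 2 : ℝ) : ℂ)
      = 𝔼 h, (𝔼 x, mDiff h a x) * conj (𝔼 x, mDiff h b x) := by
  push_cast
  simp only [← Complex.mul_conj', Complex.conj_expect, Fintype.expect_mul_expect, mDiff, map_mul,
    Complex.conj_conj]
  let e : X × X × X ≃ X × X × X :=
    { toFun p := (p.2.1 - p.2.2, p.2.2 + p.1, p.2.2)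
      invFun p := (p.2.1 - p.2.2, p.1 + p.2.2, p.2.2)
      left_inv := by rintro ⟨h, x, x'⟩; simp
      right_inv := by rintro ⟨h, x, x'⟩; simp }
  calc _ = 𝔼 p : X × X × X,
          a (p.2.1 + p.1) * conj (b p.2.1) * (conj (a (p.2.2 + p.1)) * b p.2.2) := by
        simp only [← univ_product_univ, expect_product]
    _ = 𝔼 p : X × X × X,
          a (p.2.1 + p.1) * conj (a p.2.1) * (conj (b (p.2.2 + p.1)) * b p.2.2) := by
        refine Fintype.expect_equiv e _ _ fun ⟨h, x, x'⟩ => ?_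
        have hx : x' + h + (x - x') = x + h := by abel
        simp only [e, Equiv.coe_fn_mk, hx, add_sub_cancel]
        ring
    _ = _ := by simp only [← univ_product_univ, expect_product]

variable {Z : Type*} [Fintype Z]

lemma expect_expect_norm_sq_correlation (q : Z → X → ℂ) :
    𝔼 p : Z × Z, 𝔼 h, ‖𝔼 x, q p.1 (x + h) * conj (q p.2 x)‖ ^ 2
      = 𝔼 h, ‖𝔼 x, 𝔼 z, mDiff h (q z) x‖ ^ 2 := by
  apply Complex.ofReal_injective
  conv_lhs => rw [Complex.ofReal_expect]
  conv_rhs => rw [Complex.ofReal_expect]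
  simp only [expect_norm_sq_correlation,
    expect_comm (s := (univ : Finset X)) (t := (univ : Finset Z)), Complex.ofReal_norm_expect_sq]
  exact expect_comm _ _ _

lemma gowersSq_one_expect_le (q : Z → X → ℂ) :
    gowersSq 1 (fun x => 𝔼 z, q z x)
      ≤ 𝔼 h, gowersSq 0 (fun x => 𝔼 z, mDiff h (q z) x) := by
  calc gowersSq 1 (fun x => 𝔼 z, q z x)
      = 𝔼 h, ‖𝔼 p : Z × Z, 𝔼 x, q p.1 (x + h) * conj (q p.2 x)‖ ^ 2 := by
        simp only [gowersSq_succ, gowersSq_zero, mDiff_expect]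
        simp only [expect_comm (s := (univ : Finset X)) (t := (univ : Finset (Z × Z)))]
    _ ≤ 𝔼 h, 𝔼 p : Z × Z, ‖𝔼 x, q p.1 (x + h) * conj (q p.2 x)‖ ^ 2 :=
        expect_le_expect fun h _ => norm_expect_sq_le _
    _ = 𝔼 h, gowersSq 0 (fun x => 𝔼 z, mDiff h (q z) x) := by
        rw [expect_comm, expect_expect_norm_sq_correlation]
        simp only [gowersSq_zero]

lemma gowersSq_succ_expect_le (r : ℕ) (q : Z → X → ℂ) :
    gowersSq (r + 1) (fun x => 𝔼 z, q z x)
      ≤ 𝔼 h, gowersSq r (fun x => 𝔼 z, mDiff h (q z) x) := by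
  induction r generalizing Z with
  | zero => exact gowersSq_one_expect_le q
  | succ r ih =>
    let q₂ (h₀ : X) (p : Z × Z) (x : X) : ℂ := q p.1 (x + h₀) * conj (q p.2 x)
    have hcomm : ∀ h h₀ : X, (fun x => 𝔼 p, mDiff h (q₂ h₀ p) x)
        = mDiff h₀ (fun x => 𝔼 z, mDiff h (q z) x) := by
      intro h h₀
      rw [mDiff_expect]
      funext x
      refine expect_congr rfl fun p _ => ?_
      simp only [q₂, mDiff, map_mul, Complex.conj_conj, add_right_comm x h₀ h]
      ring
    calc gowersSq (r + 2) (fun x => 𝔼 z, q z x)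
        = 𝔼 h₀, gowersSq (r + 1) (fun x => 𝔼 p, q₂ h₀ p x) := by
          rw [gowersSq_succ]
          simp only [mDiff_expect, q₂]
      _ ≤ 𝔼 h₀, 𝔼 h, gowersSq r (fun x => 𝔼 p, mDiff h (q₂ h₀ p) x) :=
          expect_le_expect fun h₀ _ => ih (q₂ h₀)
      _ = 𝔼 h, gowersSq (r + 1) (fun x => 𝔼 z, mDiff h (q z) x) := by
          rw [expect_comm]
          simp only [hcomm, gowersSq_succ]

lemma gowersSq_expect_le_expect_gowersSq_one (r : ℕ) (q : Z → X → ℂ) :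
    gowersSq (r + 1) (fun x => 𝔼 z, q z x)
      ≤ 𝔼 k : Fin r → X, gowersSq 1 (fun x => 𝔼 z, mDiffIter r k (q z) x) := by
  induction r generalizing q with
  | zero => exact (Fintype.expect_const _).ge
  | succ r ih =>
    calc gowersSq (r + 2) (fun x => 𝔼 z, q z x)
        ≤ 𝔼 h, gowersSq (r + 1) (fun x => 𝔼 z, mDiff h (q z) x) :=
          gowersSq_succ_expect_le _ q
      _ ≤ 𝔼 h, 𝔼 k : Fin r → X,
            gowersSq 1 (fun x => 𝔼 z, mDiffIter r k (mDiff h (q z)) x) :=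
          expect_le_expect fun h _ => ih _
      _ = 𝔼 k : Fin (r + 1) → X,
            gowersSq 1 (fun x => 𝔼 z, mDiffIter (r + 1) k (q z) x) := by
          simp only [Fin.expect_pi_eq_expect_cons, mDiffIter_succ]

end Gowers

/-- Lemma `cs`.  For 1-bounded `f₁,…,fₘ : 𝔽_q × 𝔽_q → ℂ`, with
`F(x) = 𝔼_y ∏ᵢ fᵢ(x,y)` and `F_{h₁,…,h_t}(x) = 𝔼_y ∏ᵢ Δ⁽¹⁾_{h₁,…,h_t} fᵢ(x,y)`,
one has `‖F‖_{U^s}^{2^{2s−2}} ≤ 𝔼_{h₁,…,h_{s−2}} ‖F_{h₁,…,h_{s−2}}‖_{U²}⁴` for `s ≥ 2`. -/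
theorem statement11 (F : Type) [Field F] [Fintype F] (m : ℕ)
    (f : Fin m → F → F → ℂ) (hf : ∀ i x y, ‖f i x y‖ ≤ 1)
    (s : ℕ) (hs : 2 ≤ s) :
    gowersNorm s (fun x => (∑ y : F, ∏ i : Fin m, f i x y) / (Fintype.card F : ℂ))
        ^ (2 ^ (2 * s - 2) : ℕ)
      ≤ (∑ h : Fin (s - 2) → F,
            gowersNorm 2 (fun x =>
              (∑ y : F, ∏ i : Fin m, mDiff1Iter (s - 2) h (f i) x y)
                / (Fintype.card F : ℂ)) ^ (4 : ℕ))
          / (Fintype.card F : ℝ) ^ (s - 2) := by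
  generalize ht : s - 2 = t
  obtain rfl : s = t + 2 := by omega
  let g (y x : F) : ℂ := ∏ i, f i x y
  have hF : (fun x => (∑ y, ∏ i, f i x y) / (Fintype.card F : ℂ))
      = fun x => 𝔼 y, g y x := by
    simp only [Fintype.expect_eq_sum_div_card, g]
  have hFk : ∀ k : Fin t → F,
      (fun x => (∑ y, ∏ i, mDiff1Iter t k (f i) x y) / (Fintype.card F : ℂ))
        = fun x => 𝔼 y, mDiffIter t k (g y) x := by
    intro k
    simp only [Fintype.expect_eq_sum_div_card, g, mDiff1Iter_apply, mDiffIter_prod]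
  have hg : ∀ x, ‖𝔼 y, g y x‖ ≤ 1 := fun x =>
    (RCLike.norm_expect_le (K := ℝ)).trans <| expect_le univ_nonempty fun y _ => by
      simpa only [g, norm_prod] using prod_le_one (fun i _ => norm_nonneg _) fun i _ => hf i x y
  have hRHS : (∑ k : Fin t → F, gowersNorm 2 (fun x => 𝔼 y, mDiffIter t k (g y) x) ^ 4)
      / (Fintype.card F : ℝ) ^ t
        = 𝔼 k, gowersSq 1 (fun x => 𝔼 y, mDiffIter t k (g y) x) := by
    simp only [show 4 = 2 ^ (1 + 1) from rfl, gowersNorm_pow_eq_gowersSq,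
      Fintype.expect_eq_sum_div_card, Fintype.card_fun, Fintype.card_fin, Nat.cast_pow]
  simp only [hF, hFk, hRHS]
  calc gowersNorm (t + 2) (fun x => 𝔼 y, g y x) ^ 2 ^ (2 * (t + 2) - 2)
      = gowersSq (t + 1) (fun x => 𝔼 y, g y x) ^ 2 ^ t := by
        rw [show 2 * (t + 2) - 2 = (t + 2) + t by omega, pow_add, pow_mul,
          gowersNorm_pow_eq_gowersSq]
    _ ≤ gowersSq (t + 1) (fun x => 𝔼 y, g y x) :=
        pow_le_of_le_one (gowersSq_nonneg _ _) (gowersSq_le_one _ hg) (by positivity)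
    _ ≤ 𝔼 k, gowersSq 1 (fun x => 𝔼 y, mDiffIter t k (g y) x) :=
        gowersSq_expect_le_expect_gowersSq_one t g
end

section
/- Let 𝔽_q be a finite field and let f_1, …, f_m : 𝔽_q × 𝔽_q → ℂ be 1-bounded. Set F(x) := 𝔼_{y∈𝔽_q} ∏_{i=1}^m f_i(x, y), and for h ∈ 𝔽_q set F_h(x) := 𝔼_{y∈𝔽_q} ∏_{i=1}^m Δ^{(1)}_h f_i(x, y). Then for every integer s ≥ 3, ‖F‖_{U^s}^{2^{s+1}} ≤ 𝔼_{h∈𝔽_q} ‖F_h‖_{U^{s−1}}^{2^{s−1}}. -/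
/-!
Write `n = s - 1`. Differencing once more, `‖F‖_{U^s}^{2^s}` is an average over `k ∈ 𝔽_q^{n}` of
`|𝔼_x Δ_k F(x)|²`. Since `F` is an average over `y`, `Δ_k F(x)` is an average over
`ȳ ∈ 𝔽_q^{2^n}` of products of the `f_i`, and Cauchy–Schwarz in `ȳ` bounds `|𝔼_x Δ_k F(x)|²` by
`𝔼_ȳ |𝔼_x …|² = 𝔼_h 𝔼_x Δ_k F_h(x)`, which after averaging over `k` gives
`‖F‖_{U^s}^{2^s} ≤ 𝔼_h ‖F_h‖_{U^{s-1}}^{2^{s-1}}`. As `F` is 1-bounded, `‖F‖_{U^s} ≤ 1`, so the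
left-hand side only decreases when the exponent is doubled.
-/

open Finset Complex ComplexConjugate

lemma normSq_sum_le_card_mul {Y : Type*} [Fintype Y] (a : Y → ℂ) :
    normSq (∑ y, a y) ≤ Fintype.card Y * ∑ y, normSq (a y) := by
  simp only [← Complex.sq_norm]
  calc ‖∑ y, a y‖ ^ 2 ≤ (∑ y, ‖a y‖) ^ 2 := by gcongr; exact norm_sum_le _ _
    _ ≤ Fintype.card Y * ∑ y, ‖a y‖ ^ 2 := sq_sum_le_card_mul_sum_sq

section Differences

variable {α : Type*}

lemma mDiff_comm_s12 [AddCommMonoid α] (a b : α) (f : α → ℂ) :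
    mDiff a (mDiff b f) = mDiff b (mDiff a f) := by
  funext x
  simp only [mDiff, map_mul, conj_conj]
  rw [add_right_comm]
  ring

lemma mDiffIter_mDiff_s12 [AddCommMonoid α] (n : ℕ) (k : Fin n → α) (a : α) (f : α → ℂ) :
    mDiffIter n k (mDiff a f) = mDiff a (mDiffIter n k f) := by
  induction n generalizing f with
  | zero => rfl
  | succ n ih =>
    change mDiffIter n _ (mDiff (k 0) (mDiff a f)) = _
    rw [mDiff_comm_s12, ih]
    rfl

lemma mDiffIter_div_ofReal [Add α] (n : ℕ) (k : Fin n → α) (f : α → ℂ) (r : ℝ) :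
    mDiffIter n k (fun x => f x / r) = fun x => mDiffIter n k f x / r ^ 2 ^ n := by
  induction n generalizing f r with
  | zero => simp only [pow_zero, pow_one]; rfl
  | succ n ih =>
    have hdiff : mDiff (k 0) (fun x => f x / r) = fun x => mDiff (k 0) f x / (r ^ 2 : ℝ) := by
      funext x
      simp only [mDiff, map_div₀, conj_ofReal]
      push_cast
      ring
    change mDiffIter n _ (mDiff (k 0) _) = _
    rw [hdiff, ih]
    funext x
    push_cast
    rw [← pow_mul, ← pow_succ']
    rfl

lemma norm_mDiffIter_le_one_s12 [Add α] (n : ℕ) (k : Fin n → α) {f : α → ℂ}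
    (hf : ∀ x, ‖f x‖ ≤ 1) (x : α) : ‖mDiffIter n k f x‖ ≤ 1 := by
  induction n generalizing f with
  | zero => exact hf x
  | succ n ih =>
    refine ih _ fun x => ?_
    simp only [mDiff, norm_mul, norm_conj]
    exact mul_le_one₀ (hf _) (norm_nonneg _) (hf x)

noncomputable def pairDiff [Add α] {Y : Type*} (a : α) (G : α → Y → ℂ) : α → Y × Y → ℂ :=
  fun x p => G (x + a) p.1 * conj (G x p.2)

lemma mDiff_sum [Add α] {Y : Type*} [Fintype Y] (a : α) (G : α → Y → ℂ) :
    mDiff a (fun x => ∑ y, G x y) = fun x => ∑ p, pairDiff a G x p := by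
  funext x
  simp only [mDiff, pairDiff, map_sum, sum_mul_sum, Fintype.sum_prod_type]

lemma sum_mDiff_pairDiff [AddCommMonoid α] {Y : Type*} [Fintype Y] (a h : α) (G : α → Y → ℂ) :
    (fun x => ∑ p, mDiff h (fun x => pairDiff a G x p) x)
      = mDiff a (fun x => ∑ y, mDiff h (fun x => G x y) x) := by
  rw [mDiff_sum]
  funext x
  refine sum_congr rfl fun p _ => ?_
  simp only [pairDiff, mDiff, map_mul, conj_conj, add_right_comm x h a]
  ring

end Differences

section GowersSum

variable {α : Type*} [Add α] [Fintype α]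

noncomputable def gowersSum (s : ℕ) (f : α → ℂ) : ℂ :=
  ∑ h : Fin s → α, ∑ x : α, mDiffIter s h f x

lemma gowersSum_div_ofReal (n : ℕ) (f : α → ℂ) (r : ℝ) :
    gowersSum n (fun x => f x / r) = gowersSum n f / r ^ 2 ^ n := by
  simp only [gowersSum, mDiffIter_div_ofReal, ← sum_div]

lemma norm_gowersSum_le (n : ℕ) {f : α → ℂ} (hf : ∀ x, ‖f x‖ ≤ 1) :
    ‖gowersSum n f‖ ≤ (Fintype.card α : ℝ) ^ (n + 1) := by
  calc ‖gowersSum n f‖ ≤ ∑ _k : Fin n → α, ∑ _x : α, (1 : ℝ) :=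
        (norm_sum_le _ _).trans <| sum_le_sum fun k _ =>
          (norm_sum_le _ _).trans <| sum_le_sum fun x _ => norm_mDiffIter_le_one_s12 n k hf x
    _ = (Fintype.card α : ℝ) ^ (n + 1) := by simp [pow_succ]

end GowersSum

section AddCommGroup

variable {α : Type*} [AddCommGroup α] [Fintype α]

lemma sum_sum_mDiff (g : α → ℂ) : ∑ a : α, ∑ x : α, mDiff a g x = normSq (∑ x : α, g x) := by
  rw [sum_comm, ← mul_conj, map_sum, mul_sum]
  refine sum_congr rfl fun x _ => ?_
  simp only [mDiff]
  rw [← sum_mul]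
  exact congrArg (· * _) (Fintype.sum_equiv (Equiv.addLeft x) _ _ fun _ => rfl)

lemma gowersSum_succ (n : ℕ) (f : α → ℂ) :
    gowersSum (n + 1) f = ((∑ k : Fin n → α, normSq (∑ x : α, mDiffIter n k f x) : ℝ) : ℂ) := by
  rw [gowersSum, ← (Fin.consEquiv fun _ => α).sum_comp, Fintype.sum_prod_type]
  simp only [Fin.consEquiv_apply, mDiffIter, Fin.cons_succ, Fin.cons_zero, mDiffIter_mDiff_s12]
  rw [sum_comm]
  push_cast
  exact sum_congr rfl fun k _ => sum_sum_mDiff _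

lemma gowersNorm_pow_two_pow (s : ℕ) (f : α → ℂ) :
    gowersNorm s f ^ 2 ^ s = ‖gowersSum s f‖ / (Fintype.card α : ℝ) ^ (s + 1) := by
  rw [gowersNorm, ← Real.rpow_natCast, ← Real.rpow_mul (norm_nonneg _), Nat.cast_pow,
    Nat.cast_ofNat, inv_mul_cancel₀ (by positivity), Real.rpow_one, norm_div, norm_pow,
    norm_natCast, gowersSum]

lemma gowersNorm_le_one (s : ℕ) {f : α → ℂ} (hf : ∀ x, ‖f x‖ ≤ 1) : gowersNorm s f ≤ 1 := by
  refine Real.rpow_le_one (norm_nonneg _) ?_ (by positivity)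
  rw [norm_div, norm_pow, norm_natCast]
  exact div_le_one_of_le₀ (norm_gowersSum_le s hf) (by positivity)

/-- Cauchy–Schwarz over the `2^n`-tuples of `y`s into which `Δ_k` expands `∑_y G(·, y)`; the
induction replaces `Y` by `Y × Y` through `pairDiff`. -/
lemma normSq_sum_mDiffIter_sum_le (n : ℕ) {Y : Type*} [Fintype Y] (G : α → Y → ℂ)
    (k : Fin n → α) :
    normSq (∑ x, mDiffIter n k (fun x => ∑ y, G x y) x)
      ≤ Fintype.card Y ^ 2 ^ n *
        (∑ h, ∑ x, mDiffIter n k (fun x => ∑ y, mDiff h (fun x => G x y) x) x).re := by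
  induction n generalizing Y with
  | zero =>
    change normSq (∑ x, ∑ y, G x y) ≤ _ * (∑ h, ∑ x, ∑ y, mDiff h (fun x => G x y) x).re
    have hswap : ∑ h, ∑ x, ∑ y, mDiff h (fun x => G x y) x
        = ((∑ y, normSq (∑ x, G x y) : ℝ) : ℂ) := by
      simp only [sum_comm (γ := Y), ofReal_sum, ← sum_sum_mDiff]
    rw [hswap, ofReal_re, pow_zero, pow_one, sum_comm]
    exact normSq_sum_le_card_mul _
  | succ n ih =>
    change normSq (∑ x, mDiffIter n _ (mDiff (k 0) _) x)
      ≤ _ * (∑ h, ∑ x, mDiffIter n _ (mDiff (k 0) _) x).re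
    rw [mDiff_sum]
    simp only [← sum_mDiff_pairDiff]
    refine (ih (pairDiff (k 0) G) _).trans_eq ?_
    rw [Fintype.card_prod, Nat.cast_mul, ← sq, ← pow_mul, pow_succ' 2 n]

lemma norm_gowersSum_succ_sum_le (n : ℕ) {Y : Type*} [Fintype Y] (G : α → Y → ℂ) :
    ‖gowersSum (n + 1) (fun x => ∑ y, G x y)‖
      ≤ Fintype.card Y ^ 2 ^ n *
        ∑ h, ‖gowersSum n (fun x => ∑ y, mDiff h (fun x => G x y) x)‖ := by
  rw [gowersSum_succ, norm_real, Real.norm_of_nonneg (sum_nonneg fun _ _ => normSq_nonneg _),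
    mul_sum]
  calc _ ≤ ∑ k : Fin n → α, (Fintype.card Y : ℝ) ^ 2 ^ n *
          (∑ h, ∑ x, mDiffIter n k (fun x => ∑ y, mDiff h (fun x => G x y) x) x).re :=
        sum_le_sum fun k _ => normSq_sum_mDiffIter_sum_le n G k
    _ = ∑ h, (Fintype.card Y : ℝ) ^ 2 ^ n *
          (gowersSum n (fun x => ∑ y, mDiff h (fun x => G x y) x)).re := by
        simp only [gowersSum, re_sum, ← mul_sum]
        rw [sum_comm]
    _ ≤ _ := by gcongr; exact re_le_norm _

lemma norm_gowersSum_succ_average_le (n : ℕ) {Y : Type*} [Fintype Y] (G : α → Y → ℂ) :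
    ‖gowersSum (n + 1) (fun x => (∑ y, G x y) / Fintype.card Y)‖
      ≤ ∑ h, ‖gowersSum n (fun x => (∑ y, mDiff h (fun x => G x y) x) / Fintype.card Y)‖ := by
  have hcast : ((Fintype.card Y : ℝ) : ℂ) = Fintype.card Y := ofReal_natCast _
  simp only [← hcast, gowersSum_div_ofReal, norm_div, norm_pow, norm_real, ← sum_div,
    Real.norm_natCast]
  rcases (Fintype.card Y).eq_zero_or_pos with hY | hY
  · simp [hY]
  rw [div_le_div_iff₀ (by positivity) (by positivity), pow_succ', pow_mul']
  calc _ ≤ (Fintype.card Y ^ 2 ^ n *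
          ∑ h, ‖gowersSum n (fun x => ∑ y, mDiff h (fun x => G x y) x)‖) *
          (Fintype.card Y : ℝ) ^ 2 ^ n := by
        gcongr; exact norm_gowersSum_succ_sum_le n G
    _ = _ := by ring

end AddCommGroup

/-- single-step Cauchy–Schwarz.  For 1-bounded `f₁,…,fₘ : 𝔽_q×𝔽_q → ℂ`,
with `F(x) = 𝔼_y ∏ᵢ fᵢ(x,y)` and `F_h(x) = 𝔼_y ∏ᵢ Δ⁽¹⁾_h fᵢ(x,y)`, one has
`‖F‖_{U^s}^{2^{s+1}} ≤ 𝔼_h ‖F_h‖_{U^{s−1}}^{2^{s−1}}` for every `s ≥ 3`. -/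
theorem statement12 (F : Type) [Field F] [Fintype F] (m : ℕ)
    (f : Fin m → F → F → ℂ) (hf : ∀ i x y, ‖f i x y‖ ≤ 1)
    (s : ℕ) (hs : 3 ≤ s) :
    gowersNorm s (fun x => (∑ y : F, ∏ i : Fin m, f i x y) / (Fintype.card F : ℂ))
        ^ (2 ^ (s + 1) : ℕ)
      ≤ (∑ h : F,
            gowersNorm (s - 1) (fun x =>
              (∑ y : F, ∏ i : Fin m, mDiff1 h (f i) x y) / (Fintype.card F : ℂ))
              ^ (2 ^ (s - 1) : ℕ))
          / (Fintype.card F : ℝ) := by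
  obtain ⟨n, rfl⟩ : ∃ n, s = n + 1 := ⟨s - 1, by omega⟩
  set G : F → F → ℂ := fun x y => ∏ i, f i x y
  have hG : ∀ x y, ‖G x y‖ ≤ 1 := fun x y => by
    rw [norm_prod]
    exact prod_le_one (fun i _ => norm_nonneg _) fun i _ => hf i x y
  have hAverage : ∀ x, ‖(∑ y, G x y) / Fintype.card F‖ ≤ 1 := fun x => by
    rw [norm_div, Complex.norm_natCast]
    refine div_le_one_of_le₀ ((norm_sum_le _ _).trans ?_) (by positivity)
    simpa using sum_le_sum fun y (_ : y ∈ univ) => hG x y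
  have hDiff : ∀ h x y, ∏ i, mDiff1 h (f i) x y = mDiff h (fun x => G x y) x := fun h x y => by
    simp only [mDiff1, mDiff, G, prod_mul_distrib, map_prod]
  simp only [hDiff, Nat.add_sub_cancel, gowersNorm_pow_two_pow]
  calc _ ≤ gowersNorm (n + 1) (fun x => (∑ y, G x y) / Fintype.card F) ^ 2 ^ (n + 1) :=
        pow_le_pow_of_le_one (Real.rpow_nonneg (norm_nonneg _) _)
          (gowersNorm_le_one _ hAverage) (Nat.pow_le_pow_right two_pos n.succ.le_succ)
    _ ≤ _ := by
        rw [gowersNorm_pow_two_pow, pow_succ _ (n + 1), ← div_div, ← sum_div]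
        gcongr
        exact norm_gowersSum_succ_average_le n G
end
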